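/- Suppose 𝔴_α ≠ 0 for every α ∈ Γ, Per(φ) = Fix(φ), every point of Γ is a quasi-periodic point of φ, and σ_{φ,𝔴} : F^Γ → F^Γ is finite fibre. Then ent_cset(σ_{φ,𝔴}) = ent_cset(σ_{φ|Fix(φ), 𝔴^{Fix(φ)}}) = 0, i.e. 𝖺(σ_{φ,𝔴}) = 𝖺(σ_{φ|Fix(φ), 𝔴^{Fix(φ)}}) = 0. -/
import Mathlib


open Function Set

/-- The weighted generalized shift `σ_{φ,𝔴} : F^Γ → F^Γ`,
`σ_{φ,𝔴}((x_α)_α) = (𝔴_α x_{φ(α)})_α`. The unweighted shift `σ_φ` is `wshift φ 1`. -/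
def wshift {F : Type*} [Field F] {Γ : Type*} (φ : Γ → Γ) (w : Γ → F) :
    (Γ → F) → (Γ → F) :=
  fun x α => w α * x (φ α)
/-- `f` is finite fibre if every fibre `f⁻¹(y)` is finite. -/
def FiniteFibre {A : Type*} (f : A → A) : Prop := ∀ y : A, (f ⁻¹' {y}).Finite
/-- `Per f`: the set of periodic points of `f`. -/
def PerSet {A : Type*} (f : A → A) : Set A := {x | ∃ n : ℕ, 1 ≤ n ∧ f^[n] x = x}

/-- `per x`: the period of a periodic point `x`. -/
noncomputable def perOf {A : Type*} (f : A → A) (x : A) : ℕ :=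
  sInf {n : ℕ | 1 ≤ n ∧ f^[n] x = x}

/-- `x` is a quasi-periodic point of `f` if `f^n(x) = f^m(x)` for some `m > n ≥ 1`. -/
def QuasiPeriodicPt {A : Type*} (f : A → A) (x : A) : Prop :=
  ∃ n m : ℕ, 1 ≤ n ∧ n < m ∧ f^[n] x = f^[m] x
/-- `Fix φ`: the set of fixed points of `φ`. -/
def FixS {Γ : Type*} (φ : Γ → Γ) : Set Γ := {α | φ α = α}

/-- The restriction `φ|Fix(φ) : Fix(φ) → Fix(φ)`. -/
def fixRes {Γ : Type*} (φ : Γ → Γ) : FixS φ → FixS φ :=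
  fun a => ⟨φ a.1, by
    have h : φ a.1 = a.1 := a.2
    simp only [FixS, Set.mem_setOf_eq]
    simp [h]⟩
/-- An `f`-anti-orbit: a sequence with `f (a (n+1)) = a n` for all `n`. -/
def IsAntiOrbit {A : Type*} (f : A → A) (a : ℕ → A) : Prop := ∀ n : ℕ, f (a (n + 1)) = a n

/-- There exist `m` injective `f`-anti-orbits with pairwise disjoint ranges. -/
def HasDisjointAntiOrbits {A : Type*} (f : A → A) (m : ℕ) : Prop :=
  ∃ a : Fin m → ℕ → A, (∀ i, IsAntiOrbit f (a i) ∧ Function.Injective (a i)) ∧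
    ∀ i j, i ≠ j → Disjoint (Set.range (a i)) (Set.range (a j))

/-- The infinite anti-orbit number `𝖺(f) ∈ ℕ ∪ {+∞}`. -/
noncomputable def antiOrbitNumber {A : Type*} (f : A → A) : ℕ∞ :=
  sSup ({0} ∪ {m : ℕ∞ | ∃ k : ℕ, m = (k : ℕ∞) ∧ 1 ≤ k ∧ HasDisjointAntiOrbits f k})

/-- Contravariant set-theoretical entropy (for finite fibre `f`): `ent_cset f = 𝖺(f)`. -/
noncomputable def entCset {A : Type*} (f : A → A) : ℕ∞ := antiOrbitNumber f

lemma wshift_iterate {F : Type*} [Field F] {Γ : Type*} (φ : Γ → Γ) (w : Γ → F) :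
    ∀ (n : ℕ) (x : Γ → F) (γ : Γ),
      (wshift φ w)^[n] x γ = (∏ i ∈ Finset.range n, w (φ^[i] γ)) * x (φ^[n] γ) := by
  intro n
  induction n with
  | zero => intro x γ; simp
  | succ n ih =>
      intro x γ
      rw [Function.iterate_succ_apply, ih]
      show (∏ i ∈ Finset.range n, w (φ^[i] γ)) * (wshift φ w x) (φ^[n] γ) = _
      rw [wshift]
      have h1 : ∀ i : ℕ, φ (φ^[i] γ) = φ^[i+1] γ := fun i =>
        (Function.iterate_succ_apply' φ i γ).symm
      rw [Finset.prod_range_succ, h1]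
      ring

lemma antiorbit_iterate {A : Type*} (f : A → A) (a : ℕ → A) (ha : IsAntiOrbit f a) :
    ∀ (n k : ℕ), a k = f^[n] (a (k + n)) := by
  intro n
  induction n with
  | zero => intro k; simp
  | succ n ih =>
      intro k
      rw [show k + (n+1) = k + n + 1 by ring, Function.iterate_succ_apply,
        ha (k + n)]
      exact ih k

lemma key_zero {F : Type*} [Field F] [Fintype F] {Γ : Type*} (φ : Γ → Γ) (w : Γ → F)
    (hw : ∀ α, w α ≠ 0) (hfix : ∀ α : Γ, ∃ d : ℕ, φ (φ^[d] α) = φ^[d] α) :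
    antiOrbitNumber (wshift φ w) = 0 := by
  have hN : 1 ≤ Fintype.card F - 1 := by
    have := Fintype.one_lt_card (α := F); omega
  set N := Fintype.card F - 1 with hNdef
  have noinj : ∀ a : ℕ → (Γ → F), IsAntiOrbit (wshift φ w) a →
      ¬ Function.Injective a := by
    intro a ha hinj
    have hkey : a 0 = a N := by
      funext α
      obtain ⟨d, hd⟩ := hfix α
      set β := φ^[d] α with hβdef
      have hβ : ∀ n, φ^[n] β = β := fun n => Function.iterate_fixed hd n
      have h1 : a d β = a (d + N) β := by
        rw [antiorbit_iterate _ a ha N d, wshift_iterate, hβ]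
        have hp : ∏ i ∈ Finset.range N, w (φ^[i] β) = w β ^ N := by
          rw [Finset.prod_congr rfl (fun i _ => by rw [hβ i]), Finset.prod_const,
            Finset.card_range]
        rw [hp, FiniteField.pow_card_sub_one_eq_one _ (hw β), one_mul]
      have e0 : a 0 α = (∏ i ∈ Finset.range d, w (φ^[i] α)) * a d β := by
        rw [antiorbit_iterate _ a ha d 0, wshift_iterate]
        simp [hβdef]
      have eN : a N α = (∏ i ∈ Finset.range d, w (φ^[i] α)) * a (d + N) β := by
        rw [antiorbit_iterate _ a ha d N, wshift_iterate,
          show N + d = d + N from Nat.add_comm N d]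
      rw [e0, eN, h1]
    have := hinj hkey
    omega
  have hempty : {m : ℕ∞ | ∃ k : ℕ, m = (k : ℕ∞) ∧ 1 ≤ k ∧
      HasDisjointAntiOrbits (wshift φ w) k} = ∅ := by
    ext m
    simp only [Set.mem_setOf_eq, Set.mem_empty_iff_false, iff_false]
    rintro ⟨k, -, hk1, a, h1, -⟩
    exact noinj (a ⟨0, hk1⟩) (h1 _).1 (h1 _).2
  rw [antiOrbitNumber, hempty, Set.union_empty, sSup_singleton]

/-- If `𝔴` is nowhere zero, `Per(φ) = Fix(φ)`, every point of `Γ` is quasi-periodic for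
`φ`, and `σ_{φ,𝔴}` is finite fibre, then
`ent_cset(σ_{φ,𝔴}) = ent_cset(σ_{φ|Fix(φ), 𝔴^{Fix(φ)}}) = 0`. -/
theorem stmt_14 {F : Type*} [Field F] [Fintype F] {Γ : Type*} [Nonempty Γ]
    (φ : Γ → Γ) (w : Γ → F) (hw : ∀ α : Γ, w α ≠ 0)
    (hper : PerSet φ = FixS φ)
    (hqp : ∀ α : Γ, QuasiPeriodicPt φ α)
    (hff : FiniteFibre (wshift φ w)) :
    entCset (wshift φ w) = 0 ∧
    entCset (wshift (fixRes φ) (fun a => w a.1)) = 0 := by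
  constructor
  · apply key_zero φ w hw
    intro α
    obtain ⟨n, m, h1, hlt, heq⟩ := hqp α
    refine ⟨n, ?_⟩
    have hper' : φ^[n] α ∈ PerSet φ := by
      refine ⟨m - n, by omega, ?_⟩
      rw [← Function.iterate_add_apply, show m - n + n = m by omega, ← heq]
    rw [hper] at hper'
    exact hper'
  · apply key_zero (fixRes φ) (fun a => w a.1) (fun a => hw a.1)
    intro α
    refine ⟨0, ?_⟩
    simp only [Function.iterate_zero, id]
    exact Subtype.ext α.2
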